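/- arXiv:2302.07471 — 2 statements merged into one kernel-verified Lean document; each statement's English description precedes it below -/
import Mathlib

section
/- Under the identification dφ(U,u) = (U + Uᵀ, u) of the Lie algebra of Aff^s(n,ℝ) with the tangent space of 𝒩 at (Iₙ,0), the Fisher metric satisfies g((0,u),(0,v)) = uᵀv and g((U,0),(V,0)) = tr(UV) + tr(UVᵀ) for upper triangular U, V. -/
open Matrix

/-- The Fisher metric of the multivariate normal family at the point (Iₙ, 0), as an
inner product on tangent vectors (X, x) ∈ Sym(n,ℝ) × ℝⁿ:
g((X,x),(Y,y)) = (1/2)tr(XY) + xᵀy (mixed components vanish). -/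
noncomputable def gTan {n : ℕ} (P Q : Matrix (Fin n) (Fin n) ℝ × (Fin n → ℝ)) : ℝ :=
  (1 / 2 : ℝ) * Matrix.trace (P.1 * Q.1) + P.2 ⬝ᵥ Q.2

/-- The identification dφ(U,u) = (U + Uᵀ, u) of the Lie algebra of Aff^s(n,ℝ)
with the tangent space of 𝒩 at (Iₙ, 0). -/
def dphi {n : ℕ} (P : Matrix (Fin n) (Fin n) ℝ × (Fin n → ℝ)) :
    Matrix (Fin n) (Fin n) ℝ × (Fin n → ℝ) :=
  (P.1 + P.1ᵀ, P.2)

namespace Matrix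

variable {m n R : Type*} [Fintype m] [Fintype n]

theorem trace_transpose_mul_eq_trace_mul_transpose [AddCommMonoid R] [Mul R]
    (A B : Matrix m n R) : trace (Aᵀ * B) = trace (A * Bᵀ) :=
  Finset.sum_comm

theorem trace_add_transpose_mul_add_transpose [NonAssocSemiring R] (U V : Matrix n n R) :
    trace ((U + Uᵀ) * (V + Vᵀ)) = 2 * (trace (U * V) + trace (U * Vᵀ)) := by
  rw [add_mul, mul_add, mul_add, trace_add, trace_add, trace_add, trace_transpose_mul,
    trace_transpose_mul_eq_trace_mul_transpose, two_mul]
  abel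

end Matrix

theorem gTan_dphi_mean {n : ℕ} (u v : Fin n → ℝ) :
    gTan (dphi (0, u)) (dphi (0, v)) = u ⬝ᵥ v := by
  simp [gTan, dphi]

theorem gTan_dphi_cov {n : ℕ} (U V : Matrix (Fin n) (Fin n) ℝ) :
    gTan (dphi (U, 0)) (dphi (V, 0)) = trace (U * V) + trace (U * Vᵀ) := by
  rw [gTan, dphi, dphi, trace_add_transpose_mul_add_transpose, dotProduct_zero]
  ring

theorem fisher_metric_at_identity_general (n : ℕ) (U V : Matrix (Fin n) (Fin n) ℝ)
    (u v : Fin n → ℝ) :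
    gTan (dphi (0, u)) (dphi (0, v)) = u ⬝ᵥ v ∧
    gTan (dphi (U, 0)) (dphi (V, 0)) = Matrix.trace (U * V) + Matrix.trace (U * Vᵀ) :=
  ⟨gTan_dphi_mean u v, gTan_dphi_cov U V⟩

/-- under the identification dφ(U,u) = (U + Uᵀ, u), the Fisher metric
satisfies g((0,u),(0,v)) = uᵀv and g((U,0),(V,0)) = tr(UV) + tr(UVᵀ) for upper
triangular U, V. -/
theorem fisher_metric_at_identity (n : ℕ) (U V : Matrix (Fin n) (Fin n) ℝ)
    (hU : U.BlockTriangular id) (hV : V.BlockTriangular id) (u v : Fin n → ℝ) :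
    gTan (dphi (0, u)) (dphi (0, v)) = u ⬝ᵥ v ∧
    gTan (dphi (U, 0)) (dphi (V, 0)) = Matrix.trace (U * V) + Matrix.trace (U * Vᵀ) :=
  fisher_metric_at_identity_general n U V u v
end

section
/- If a statistical manifold (M,g,∇) is conjugate symmetric (R = R*), then for every real α the α-connection ∇^{(α)} = ∇̂ + αK is also conjugate symmetric: the curvature of ∇^{(α)} equals the curvature of ∇^{(−α)}. -/
/-! Writing `∇^{(±t)} = ∇̂ ± tK`, the terms of the curvature that are of order `0` and `2` in `t`
agree for both signs, so `R^{(t)} − R^{(−t)} = 2t · d^{∇̂}K`, where `d^{∇̂}K` is the exterior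
covariant derivative of `K`. Conjugate symmetry at `t = 1` forces `d^{∇̂}K = 0`, and then the
difference vanishes for every `t`. -/

namespace StatisticalStructure

variable {𝕜 V : Type*} [CommRing 𝕜] [AddCommGroup V] [Module 𝕜 V] (bracket : V → V → V)

def curvature (D : V →ₗ[𝕜] V →ₗ[𝕜] V) (X Y Z : V) : V :=
  D X (D Y Z) - D Y (D X Z) - D (bracket X Y) Z

def exteriorCovariantDeriv (hat K : V →ₗ[𝕜] V →ₗ[𝕜] V) (X Y Z : V) : V :=
  hat X (K Y Z) + K X (hat Y Z) - hat Y (K X Z) - K Y (hat X Z) - K (bracket X Y) Z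

theorem curvature_add_smul_sub_curvature_sub_smul (hat K : V →ₗ[𝕜] V →ₗ[𝕜] V) (t : 𝕜)
    (X Y Z : V) :
    curvature bracket (hat + t • K) X Y Z - curvature bracket (hat - t • K) X Y Z =
      (2 * t) • exteriorCovariantDeriv bracket hat K X Y Z := by
  simp only [curvature, exteriorCovariantDeriv, LinearMap.add_apply, LinearMap.sub_apply,
    LinearMap.smul_apply, map_add, map_sub, map_smul]
  module

theorem exteriorCovariantDeriv_eq_zero [Invertible (2 : 𝕜)] {hat K : V →ₗ[𝕜] V →ₗ[𝕜] V}
    {X Y Z : V}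
    (h : curvature bracket (hat + K) X Y Z = curvature bracket (hat - K) X Y Z) :
    exteriorCovariantDeriv bracket hat K X Y Z = 0 := by
  have h2 : (2 : 𝕜) • exteriorCovariantDeriv bracket hat K X Y Z = 0 := by
    simpa [sub_eq_zero.mpr h] using
      (curvature_add_smul_sub_curvature_sub_smul bracket hat K 1 X Y Z).symm
  simpa using congrArg (⅟(2 : 𝕜) • ·) h2

end StatisticalStructure

/-- if a statistical structure is conjugate symmetric (R = R*, where
∇ = ∇̂ + K and ∇* = ∇̂ − K), then for every real α the α-connection
∇^{(α)} = ∇̂ + αK is also conjugate symmetric: the curvature of ∇^{(α)} equals the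
curvature of its conjugate ∇^{(−α)} = ∇̂ − αK. Here connections are left-invariant,
i.e. bilinear maps, and R(D)(X,Y)Z = D_X D_Y Z − D_Y D_X Z − D_{[X,Y]} Z. -/
theorem alpha_connection_conjugate_symmetric {V : Type*} [AddCommGroup V]
    [Module ℝ V]
    (bracket : V → V → V)
    (hat K : V →ₗ[ℝ] V →ₗ[ℝ] V)
    (R : (V →ₗ[ℝ] V →ₗ[ℝ] V) → V → V → V → V)
    (hR : ∀ D X Y Z, R D X Y Z = D X (D Y Z) - D Y (D X Z) - D (bracket X Y) Z)
    (hconjsym : ∀ X Y Z, R (hat + K) X Y Z = R (hat - K) X Y Z) :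
    ∀ (α : ℝ) (X Y Z : V), R (hat + α • K) X Y Z = R (hat - α • K) X Y Z := by
  have hR' : R = StatisticalStructure.curvature bracket := by
    funext D X Y Z
    exact hR D X Y Z
  subst hR'
  intro α X Y Z
  have hdK := StatisticalStructure.exteriorCovariantDeriv_eq_zero bracket (hconjsym X Y Z)
  rw [← sub_eq_zero, StatisticalStructure.curvature_add_smul_sub_curvature_sub_smul, hdK,
    smul_zero]
end
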